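/- Let n and m be integers with 0 ≤ 3m ≤ n. The number of subsets L of {1, …, n} with |L| ≤ m such that for every i ∈ {1, …, n} the suffix {i, i+1, …, n} contains at least twice as many elements not in L as elements in L (that is, (n − i + 1) − |L ∩ {i,…,n}| ≥ 2·|L ∩ {i,…,n}| for all i) equals C(n,m) − C(n,<m). -/
import Mathlib

namespace BallotAux
open Finset

/-- Good subsets of `Icc a n` of size exactly `k`. -/
def T (n a k : ℕ) : Finset (Finset ℕ) :=
  (Icc a n).powerset.filter (fun L => L.card = k ∧
    ∀ i ∈ Icc a n, 3 * (L ∩ Icc i n).card ≤ n - i + 1)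

lemma mem_T {n a k : ℕ} {L : Finset ℕ} :
    L ∈ T n a k ↔ L ⊆ Icc a n ∧ L.card = k ∧
      ∀ i ∈ Icc a n, 3 * (L ∩ Icc i n).card ≤ n - i + 1 := by
  simp [T, and_assoc]

lemma card_inter_le (n i : ℕ) (L : Finset ℕ) : (L ∩ Icc i n).card ≤ n + 1 - i := by
  calc (L ∩ Icc i n).card ≤ (Icc i n).card := card_le_card inter_subset_right
  _ = n + 1 - i := Nat.card_Icc i n

lemma T_zero (n a : ℕ) : T n a 0 = {∅} := by
  ext L
  simp only [mem_T, mem_singleton, card_eq_zero]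
  constructor
  · rintro ⟨-, h, -⟩; exact h
  · rintro rfl; simp

lemma T_empty (n a k : ℕ) (ha : a ≤ n) (hk : n - a + 1 < 3 * k) : T n a k = ∅ := by
  ext L
  simp only [mem_T, Finset.notMem_empty, iff_false]
  rintro ⟨hsub, hcard, hcond⟩
  have h1 := hcond a (by simp [ha])
  rw [inter_eq_left.2 (fun x hx => hsub hx), hcard] at h1
  omega

lemma T_rec (n a k : ℕ) (ha : a ≤ n) (hk : 3 * (k + 1) ≤ n - a + 1) :
    (T n a (k+1)).card = (T n (a+1) (k+1)).card + (T n (a+1) k).card := by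
  classical
  have hsplit := Finset.card_filter_add_card_filter_not
    (s := T n a (k+1)) (p := fun L => a ∈ L)
  have e0 : (T n a (k+1)).filter (fun L => ¬ a ∈ L) = T n (a+1) (k+1) := by
    ext L
    simp only [mem_filter, mem_T]
    constructor
    · rintro ⟨⟨hsub, hcard, hcond⟩, hna⟩
      refine ⟨fun x hx => ?_, hcard, fun i hi => hcond i ?_⟩
      · have := hsub hx
        simp only [mem_Icc] at this ⊢
        have : x ≠ a := fun hxa => hna (hxa ▸ hx)
        omega
      · simp only [mem_Icc] at hi ⊢; omega
    · rintro ⟨hsub, hcard, hcond⟩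
      have hsub' : L ⊆ Icc a n := hsub.trans (Icc_subset_Icc (by omega) le_rfl)
      refine ⟨⟨hsub', hcard, fun i hi => ?_⟩, fun haL => by
        have := hsub haL; simp [mem_Icc] at this⟩
      rcases Nat.eq_or_lt_of_le (mem_Icc.1 hi).1 with rfl | hlt
      · rw [inter_eq_left.2 hsub', hcard]; omega
      · exact hcond i (mem_Icc.2 ⟨hlt, (mem_Icc.1 hi).2⟩)
  have e1 : ((T n a (k+1)).filter (fun L => a ∈ L)).card = (T n (a+1) k).card := by
    apply Finset.card_bij (fun L _ => L.erase a)
    · rintro L hL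
      simp only [mem_filter, mem_T] at hL
      obtain ⟨⟨hsub, hcard, hcond⟩, haL⟩ := hL
      refine mem_T.2 ⟨fun x hx => ?_, ?_, fun i hi => ?_⟩
      · have hx' := hsub (mem_of_mem_erase hx)
        have := ne_of_mem_erase hx
        simp only [mem_Icc] at hx' ⊢; omega
      · simp [card_erase_of_mem haL, hcard]
      · have hna : a ∉ Icc i n := by
          simp only [mem_Icc] at hi ⊢; omega
        have : L.erase a ∩ Icc i n = L ∩ Icc i n := by
          rw [erase_inter, erase_eq_of_notMem (fun hm => hna (mem_of_mem_inter_right hm))]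
        rw [this]
        exact hcond i (mem_Icc.2 (by simp only [mem_Icc] at hi; omega))
    · intro L1 h1 L2 h2 he
      simp only [mem_filter] at h1 h2
      rw [← insert_erase h1.2, ← insert_erase h2.2, he]
    · intro L' hL'
      rw [mem_T] at hL'
      obtain ⟨hsub, hcard, hcond⟩ := hL'
      have hna : a ∉ L' := fun hm => by have := hsub hm; simp only [mem_Icc] at this; omega
      refine ⟨insert a L', ?_, by rw [erase_insert hna]⟩
      simp only [mem_filter, mem_T]
      refine ⟨⟨?_, ?_, fun i hi => ?_⟩, mem_insert_self a L'⟩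
      · intro x hx
        rcases mem_insert.1 hx with rfl | hx'
        · simp [ha]
        · exact (Icc_subset_Icc (by omega) le_rfl) (hsub hx')
      · rw [card_insert_of_notMem hna, hcard]
      · rcases Nat.eq_or_lt_of_le (mem_Icc.1 hi).1 with rfl | hlt
        · have : insert a L' ∩ Icc a n = insert a L' := inter_eq_left.2 (by
            intro x hx
            rcases mem_insert.1 hx with rfl | hx'
            · simp [ha]
            · exact (Icc_subset_Icc (by omega) le_rfl) (hsub hx'))
          rw [this, card_insert_of_notMem hna, hcard]
          omega
        · have hia : a ∉ Icc i n := by simp only [mem_Icc]; omega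
          rw [insert_inter_of_notMem hia]
          exact hcond i (mem_Icc.2 ⟨hlt, (mem_Icc.1 hi).2⟩)
  rw [e0, e1] at hsplit
  omega
lemma choose_double (k : ℕ) : (3*k+2).choose (k+1) = 2 * (3*k+2).choose k := by
  have h := Nat.choose_succ_right_eq (3*k+2) k
  have h2 : 3*k+2-k = 2*(k+1) := by omega
  rw [h2] at h
  have h' : (3*k+2).choose (k+1) * (k+1) = (2 * (3*k+2).choose k) * (k+1) := by linarith
  exact Nat.eq_of_mul_eq_mul_right (Nat.succ_pos k) h'

lemma T_formula (n : ℕ) : ∀ ℓ a k, n + 1 - a = ℓ → 3 * (k + 1) ≤ n + 2 - a →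
    ((T n a (k+1)).card : ℤ) = (ℓ.choose (k+1) : ℤ) - 2 * ℓ.choose k := by
  intro ℓ
  induction ℓ with
  | zero => intro a k hℓ hk; omega
  | succ ℓ ih =>
    intro a k hℓ hk
    have ha : a ≤ n := by omega
    by_cases hcase : 3 * (k + 1) ≤ n - a + 1
    · rw [T_rec n a k ha hcase]
      push_cast
      have h1 : ((T n (a+1) (k+1)).card : ℤ) = (ℓ.choose (k+1) : ℤ) - 2 * ℓ.choose k :=
        ih (a+1) k (by omega) (by omega)
      cases k with
      | zero =>
        rw [T_zero]
        simp only [zero_add, Nat.choose_one_right, Nat.choose_zero_right, card_singleton] at h1 ⊢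
        push_cast
        omega
      | succ k' =>
        have h2 : ((T n (a+1) (k'+1)).card : ℤ) = (ℓ.choose (k'+1) : ℤ) - 2 * ℓ.choose k' :=
          ih (a+1) k' (by omega) (by omega)
        rw [h1, h2]
        have p1 : (ℓ+1).choose (k'+2) = ℓ.choose (k'+1) + ℓ.choose (k'+2) :=
          Nat.choose_succ_succ' ℓ (k'+1)
        have p2 : (ℓ+1).choose (k'+1) = ℓ.choose k' + ℓ.choose (k'+1) :=
          Nat.choose_succ_succ' ℓ k'
        rw [p1, p2]
        push_cast
        ring
    · have heq : n - a + 1 < 3 * (k+1) := by omega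
      rw [T_empty n a (k+1) ha heq]
      have hl : ℓ + 1 = 3*k + 2 := by omega
      rw [hl, choose_double k]
      push_cast
      simp

lemma telescope (n : ℕ) : ∀ m : ℕ,
    (1 : ℤ) + ∑ i ∈ Finset.range m, ((n.choose (i+1) : ℤ) - 2 * n.choose i) =
      (n.choose m : ℤ) - ∑ k ∈ Finset.range m, (n.choose k : ℤ) := by
  intro m
  induction m with
  | zero => simp
  | succ m ih =>
    rw [Finset.sum_range_succ, Finset.sum_range_succ, ← add_assoc, ih]
    ring

end BallotAux

open scoped Classical in
/-- The number of subsets `L` of `{1,…,n}` with `|L| ≤ m` such that every suffix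
`{i,…,n}` contains at least twice as many elements not in `L` as elements in `L`
equals `C(n,m) − C(n,<m)`. -/
theorem ballot_count_le (n m : ℕ) (h : 3 * m ≤ n) :
    (((Finset.Icc 1 n).powerset.filter (fun L : Finset ℕ =>
        L.card ≤ m ∧ ∀ i ∈ Finset.Icc 1 n,
          2 * (L ∩ Finset.Icc i n).card ≤
            (n - i + 1) - (L ∩ Finset.Icc i n).card)).card : ℤ) =
      (Nat.choose n m : ℤ) - ∑ k ∈ Finset.range m, (Nat.choose n k : ℤ) := by
  classical
  have hset : (Finset.Icc 1 n).powerset.filter (fun L : Finset ℕ =>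
        L.card ≤ m ∧ ∀ i ∈ Finset.Icc 1 n,
          2 * (L ∩ Finset.Icc i n).card ≤
            (n - i + 1) - (L ∩ Finset.Icc i n).card)
      = (Finset.range (m+1)).biUnion (fun k => BallotAux.T n 1 k) := by
    ext L
    simp only [Finset.mem_filter, Finset.mem_powerset, Finset.mem_biUnion,
      Finset.mem_range, BallotAux.mem_T]
    constructor
    · rintro ⟨hsub, hcard, hcond⟩
      exact ⟨L.card, by omega, hsub, rfl, fun i hi => by
        have h1 := hcond i hi
        have h2 := BallotAux.card_inter_le n i L
        omega⟩
    · rintro ⟨k, hk, hsub, hcard, hcond⟩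
      exact ⟨hsub, by omega, fun i hi => by
        have h1 := hcond i hi
        have h2 := BallotAux.card_inter_le n i L
        omega⟩
  rw [hset, Finset.card_biUnion (by
    intro x hx y hy hxy
    simp only [Finset.disjoint_left]
    intro L hLx hLy
    exact hxy ((BallotAux.mem_T.1 hLx).2.1 ▸ (BallotAux.mem_T.1 hLy).2.1.symm ▸ rfl))]
  push_cast
  rw [Finset.sum_range_succ']
  have h0 : ((BallotAux.T n 1 0).card : ℤ) = 1 := by rw [BallotAux.T_zero]; simp
  have hterm : ∀ i ∈ Finset.range m,
      ((BallotAux.T n 1 (i+1)).card : ℤ) = (n.choose (i+1) : ℤ) - 2 * n.choose i := by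
    intro i hi
    have := Finset.mem_range.1 hi
    exact BallotAux.T_formula n n 1 i (by omega) (by omega)
  rw [Finset.sum_congr rfl hterm, h0, add_comm]
  exact BallotAux.telescope n m
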